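/- For every k >= 1, the twincut graph G_k is edge-critical: for every edge e of G_k, the graph G_k minus e is (k-1)-colorable. -/

import Mathlib

/-- A structured tree: a rooted tree together with, at each internal node,
a graph on its children. A `leaf` is a tree with a single (leaf) node; a
`node ι c g` has children indexed by `ι`, subtrees `c i`, and the graph `g`
on the children. -/
inductive STree : Type 1 where
  | leaf : STree
  | node : (ι : Type) → (ι → STree) → SimpleGraph ι → STree

namespace STree

/-- The type of nodes of a structured tree. -/
def NodeType : STree → Type
  | leaf => PUnit
  | node ι c _ => PUnit ⊕ Σ i : ι, NodeType (c i)

/-- The type of branches (root-to-leaf paths) of a structured tree. -/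
def Branch : STree → Type
  | leaf => PUnit
  | node _ c _ => Σ i, Branch (c i)

/-- The root of a structured tree, as a node. -/
def root : (t : STree) → t.NodeType
  | leaf => PUnit.unit
  | node _ _ _ => Sum.inl PUnit.unit

/-- `onBranch t b u` means that the node `u` lies on the branch `b`. -/
def onBranch : (t : STree) → t.Branch → t.NodeType → Prop
  | leaf, _, _ => True
  | node _ c _, ⟨i, b⟩, u =>
      match u with
      | Sum.inl _ => True
      | Sum.inr ⟨j, w⟩ => ∃ h : j = i, onBranch (c i) b (h ▸ w)

/-- Adjacency between tree nodes in the realization: the union of the edges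
of the graphs `g(v)` placed on the children of each internal node `v`
(tree edges are *not* included). -/
def treeAdj : (t : STree) → t.NodeType → t.NodeType → Prop
  | leaf, _, _ => False
  | node ι c g, u, v =>
      match u, v with
      | Sum.inr ⟨i, u'⟩, Sum.inr ⟨j, v'⟩ =>
          (∃ h : i = j, treeAdj (c j) (h ▸ u') v') ∨
          (g.Adj i j ∧ u' = root (c i) ∧ v' = root (c j))
      | _, _ => False

/-- The realization `R(T,g)` of a structured tree: its vertices are the tree
nodes together with the branches; edges are those of the graphs `g(v)`, plus
an edge from each branch vertex to every tree node lying on that branch. -/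
def realization (t : STree) : SimpleGraph (t.NodeType ⊕ t.Branch) :=
  SimpleGraph.fromRel (fun x y =>
    match x, y with
    | Sum.inl u, Sum.inl v => treeAdj t u v
    | Sum.inl u, Sum.inr b => onBranch t b u
    | Sum.inr b, Sum.inl u => onBranch t b u
    | Sum.inr _, Sum.inr _ => False)

/-- The level of a node (the root is at level 1). -/
def level : (t : STree) → t.NodeType → ℕ
  | leaf, _ => 1
  | node _ c _, u =>
      match u with
      | Sum.inl _ => 1
      | Sum.inr ⟨i, w⟩ => level (c i) w + 1

/-- `IsInternalGraphOf t ⟨ι, g⟩` means that `g` is the graph attached to some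
internal node of `t` (on its children, indexed by `ι`). -/
inductive IsInternalGraphOf : STree → (Σ ι : Type, SimpleGraph ι) → Prop where
  | here : ∀ (ι : Type) (c : ι → STree) (g : SimpleGraph ι),
      IsInternalGraphOf (node ι c g) ⟨ι, g⟩
  | child : ∀ (ι : Type) (c : ι → STree) (g : SimpleGraph ι) (i : ι) (p),
      IsInternalGraphOf (c i) p → IsInternalGraphOf (node ι c g) p

end STree

/-- Builds the structured tree in which all nodes at level `i` carry the
`i`-th graph of the list on their children (so the tree has `L.length + 1`
levels). -/
def buildTree : List (Σ V : Type, SimpleGraph V) → STree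
  | [] => .leaf
  | ⟨ι, g⟩ :: rest => .node ι (fun _ => buildTree rest) g

/-- The realization of a structured tree, packaged with its vertex type. -/
def realizationSigma (t : STree) : Σ V : Type, SimpleGraph V :=
  ⟨t.NodeType ⊕ t.Branch, t.realization⟩

/-- `twincutList m` is the list `[G₂, G₃, …, G_{m+1}]` of twincut graphs. -/
def twincutList : ℕ → List (Σ V : Type, SimpleGraph V)
  | 0 => []
  | m + 1 => twincutList m ++ [realizationSigma (buildTree (twincutList m))]

/-- The structured tree `T_{m+2}` whose realization is the twincut graph
`G_{m+2}`: it has `m + 1` levels, and every node at level `i ≤ m` carries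
the graph `G_{i+1}` on its children. -/
def twincutTree (m : ℕ) : STree := buildTree (twincutList m)

/-- The twincut graphs: `G 1` is the one-vertex graph, and for `k ≥ 2`,
`G k` is the realization of the structured tree `T_k`. -/
def twincutG : ℕ → Σ V : Type, SimpleGraph V
  | 0 => ⟨PUnit, ⊥⟩
  | 1 => ⟨PUnit, ⊥⟩
  | (m + 2) => realizationSigma (twincutTree m)

/-!
With `k - 1` colors, every branch of `T_k` has exactly `k - 1` nodes, so a coloring of the tree
nodes that is proper on the graphs `g(v)` extends to the branch vertices as soon as no branch is
colored injectively. When the colors above the children of a node at depth `i` form a set `T`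
of `i` distinct colors, the graph `g(v) = G_{i+1}` on these children can, by induction on `k`, be
colored within `T` after deleting one of its edges, or so that one prescribed child gets a fresh
color and all others get colors from `T` (delete an edge at that child, which is not isolated).
To color `G_k - e`, walk from the root towards `e`, giving the next node of the walk a fresh
color and its siblings colors from `T`; every branch leaving the walk then repeats a color.
If `e` joins two children of a node `v`, color `g(v) - e` within `T`; if `e` joins a node `u` to
a branch vertex `b`, walk all the way down `b`, so that the nodes of `b` get distinct colors and
`b` can take the color of `u`.
-/

open SimpleGraph Finset

namespace SimpleGraph

variable {V α : Type*} {G : SimpleGraph V}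

def ColorableAfterEdgeDeletion (G : SimpleGraph V) (c : ℕ) : Prop :=
  ∀ e ∈ G.edgeSet, (G.deleteEdges {e}).Colorable c

theorem ColorableAfterEdgeDeletion.colorable_succ {c : ℕ} (hG : G.ColorableAfterEdgeDeletion c) :
    G.Colorable (c + 1) := by
  classical
  by_cases h : ∃ u v, G.Adj u v
  · obtain ⟨u, v, huv⟩ := h
    obtain ⟨C⟩ := hG s(u, v) huv
    refine ⟨Coloring.mk (fun x => if x = u then Fin.last c else (C x).castSucc) fun {x y} hxy => ?_⟩
    by_cases hx : x = u <;> by_cases hy : y = u <;> simp only [hx, hy, if_true, if_false]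
    · exact absurd (hx.trans hy.symm) hxy.ne
    · exact (Fin.castSucc_lt_last _).ne'
    · exact (Fin.castSucc_lt_last _).ne
    · refine Fin.castSucc_injective _ |>.ne (C.valid ((deleteEdges_adj ..).2 ⟨hxy, ?_⟩))
      intro hxy'
      rcases Sym2.eq_iff.1 (Set.mem_singleton_iff.1 hxy') with ⟨rfl, -⟩ | ⟨-, rfl⟩ <;> simp_all
  · simp only [not_exists] at h
    exact ⟨Coloring.mk (fun _ => 0) fun hxy => (h _ _ hxy).elim⟩

theorem Colorable.exists_coloring_mem {T : Finset α} (hG : G.Colorable #T) :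
    ∃ d : V → α, (∀ v, d v ∈ T) ∧ ∀ x y, G.Adj x y → d x ≠ d y :=
  let C := hG.toColoring (α := T) (by simp)
  ⟨fun v => C v, fun v => (C v).2, fun _ _ hxy heq => C.valid hxy (Subtype.ext heq)⟩

theorem exists_coloring_fresh_at {T : Finset α} {v : V} {r : α}
    (hG : G.ColorableAfterEdgeDeletion #T) (hv : ∃ w, G.Adj v w) (hr : r ∉ T) :
    ∃ d : V → α, d v = r ∧ (∀ u ≠ v, d u ∈ T) ∧ ∀ x y, G.Adj x y → d x ≠ d y := by
  classical
  obtain ⟨w, hvw⟩ := hv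
  obtain ⟨d, hdT, hd⟩ := (hG s(v, w) hvw).exists_coloring_mem
  refine ⟨Function.update d v r, by simp, fun u hu => by simp [hu, hdT], fun x y hxy => ?_⟩
  by_cases hx : x = v <;> by_cases hy : y = v
  · exact absurd (hx.trans hy.symm) hxy.ne
  · subst hx
    rw [Function.update_self, Function.update_of_ne hy]
    exact fun h => hr (h ▸ hdT y)
  · subst hy
    rw [Function.update_self, Function.update_of_ne hx]
    exact fun h => hr (h.symm ▸ hdT x)
  · simp only [Function.update_of_ne hx, Function.update_of_ne hy]
    refine hd x y ((deleteEdges_adj ..).2 ⟨hxy, fun hxy' => ?_⟩)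
    rcases Sym2.eq_iff.1 (Set.mem_singleton_iff.1 hxy') with ⟨rfl, -⟩ | ⟨-, rfl⟩ <;> simp_all

end SimpleGraph

theorem exists_fin_notMem_of_card_lt {n : ℕ} {A : Finset (Fin n)} (h : #A < n) : ∃ x, x ∉ A :=
  let ⟨x, _, hx⟩ := exists_mem_notMem_of_card_lt_card (t := univ) (by simpa using h)
  ⟨x, hx⟩

def IsCriticalChain : ℕ → List (Σ V : Type, SimpleGraph V) → Prop
  | _, [] => True
  | c, G :: L =>
      G.2.ColorableAfterEdgeDeletion c ∧ (∀ v, ∃ w, G.2.Adj v w) ∧ IsCriticalChain (c + 1) L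

theorem IsCriticalChain.colorable {n : ℕ} :
    ∀ {c : ℕ} {L : List (Σ V : Type, SimpleGraph V)}, IsCriticalChain c L →
      c + L.length ≤ n → ∀ G ∈ L, G.2.Colorable n
  | _, [], _, _, _, hG => absurd hG List.not_mem_nil
  | c, _ :: L, ⟨hG, _, hL⟩, hn, G', hG' => by
    rcases List.mem_cons.1 hG' with rfl | hG'
    · exact hG.colorable_succ.mono (by simp at hn; omega)
    · exact hL.colorable (by simp at hn; omega) G' hG'

theorem IsCriticalChain.append_singleton {G : Σ V : Type, SimpleGraph V} :
    ∀ {c : ℕ} {L : List (Σ V : Type, SimpleGraph V)}, IsCriticalChain c L →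
      G.2.ColorableAfterEdgeDeletion (c + L.length) → (∀ v, ∃ w, G.2.Adj v w) →
      IsCriticalChain c (L ++ [G])
  | c, [], _, hG, hiso => ⟨hG, hiso, trivial⟩
  | c, _ :: L, ⟨hG', hiso', hL⟩, hG, hiso =>
    ⟨hG', hiso', hL.append_singleton (by simpa [Nat.add_assoc, Nat.add_comm 1] using hG) hiso⟩

namespace STree

variable {α : Type*}

theorem onBranch_root (t : STree) (b : t.Branch) : t.onBranch b t.root := by
  cases t <;> trivial

theorem exists_onBranch :
    ∀ {L : List (Σ V : Type, SimpleGraph V)}, (∀ G ∈ L, Nonempty G.1) →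
      ∀ u : (buildTree L).NodeType, ∃ b, (buildTree L).onBranch b u
  | [], _, _ => ⟨PUnit.unit, trivial⟩
  | ⟨ι, _⟩ :: _, hL, .inl _ => by
    obtain ⟨i⟩ : Nonempty ι := hL _ List.mem_cons_self
    obtain ⟨b, -⟩ := exists_onBranch (fun G hG => hL G (List.mem_cons_of_mem _ hG)) (root _)
    exact ⟨⟨i, b⟩, trivial⟩
  | _ :: _, hL, .inr ⟨i, u⟩ => by
    obtain ⟨b, hb⟩ := exists_onBranch (fun G hG => hL G (List.mem_cons_of_mem _ hG)) u
    exact ⟨⟨i, b⟩, rfl, hb⟩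

theorem realization_adj_of_onBranch {t : STree} {u : t.NodeType} {b : t.Branch}
    (h : t.onBranch b u) : t.realization.Adj (.inl u) (.inr b) :=
  (fromRel_adj _ _ _).2 ⟨Sum.inl_ne_inr, Or.inl h⟩

theorem realization_exists_adj {L : List (Σ V : Type, SimpleGraph V)}
    (hL : ∀ G ∈ L, Nonempty G.1) (x : (buildTree L).NodeType ⊕ (buildTree L).Branch) :
    ∃ y, (buildTree L).realization.Adj x y := by
  rcases x with u | b
  · obtain ⟨b, hb⟩ := exists_onBranch hL u
    exact ⟨_, realization_adj_of_onBranch hb⟩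
  · exact ⟨_, (realization_adj_of_onBranch (onBranch_root _ b)).symm⟩

def ProperExcept (t : STree) (f : t.NodeType → α) (E : Set (Sym2 t.NodeType)) : Prop :=
  ∀ u v, t.treeAdj u v → f u = f v → s(u, v) ∈ E

/-- `A` stands for the colors of the nodes of the branch above the subtree `t`. -/
def HasFreeColor (t : STree) (f : t.NodeType → α) (A : Finset α) (b : t.Branch) :
    Prop :=
  ∃ c ∉ A, ∀ u, t.onBranch b u → f u ≠ c

theorem realization_deleteEdges_colorable {t : STree} {n : ℕ}
    {E : Set (Sym2 (t.NodeType ⊕ t.Branch))} (f : t.NodeType → Fin n)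
    (hf : ∀ u v, t.treeAdj u v → f u = f v → s(.inl u, .inl v) ∈ E)
    (hb : ∀ b, ∃ c, ∀ u, t.onBranch b u → f u = c → s(.inl u, .inr b) ∈ E) :
    (t.realization.deleteEdges E).Colorable n := by
  choose g hg using hb
  refine ⟨Coloring.mk (Sum.elim f g) fun {x y} hxy heq => ?_⟩
  obtain ⟨⟨-, hxy⟩, hE⟩ := (deleteEdges_adj ..).1 hxy
  apply hE
  rcases x with u | b <;> rcases y with v | b' <;> rcases hxy with h | h
  · exact hf u v h heq
  · exact Sym2.eq_swap ▸ hf v u h heq.symm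
  · exact hg b' u h heq
  · exact hg b' u h heq
  · exact Sym2.eq_swap ▸ hg b v h heq.symm
  · exact Sym2.eq_swap ▸ hg b v h heq.symm
  · exact h.elim
  · exact h.elim

section Glue

variable {ι : Type} {c : ι → STree} {H : SimpleGraph ι}

def glue (r : α) (f : ∀ i, (c i).NodeType → α) : (node ι c H).NodeType → α
  | .inl _ => r
  | .inr ⟨i, u⟩ => f i u

variable {r : α} {f : ∀ i, (c i).NodeType → α}

theorem properExcept_glue {E : Set (Sym2 (node ι c H).NodeType)}
    (hf : ∀ i u v, (c i).treeAdj u v → f i u = f i v → s(.inr ⟨i, u⟩, .inr ⟨i, v⟩) ∈ E)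
    (hroot : ∀ i j, H.Adj i j → f i (c i).root = f j (c j).root →
      s(.inr ⟨i, (c i).root⟩, .inr ⟨j, (c j).root⟩) ∈ E) :
    ProperExcept (node ι c H) (glue r f) E := by
  rintro (_ | ⟨i, u⟩) (_ | ⟨j, v⟩) h heq <;> try exact h.elim
  rcases h with ⟨rfl, h⟩ | ⟨hij, rfl, rfl⟩
  · exact hf i u v h heq
  · exact hroot i j hij heq

theorem properExcept_empty_glue (hf : ∀ i, ProperExcept (c i) (f i) ∅)
    (hroot : ∀ i j, H.Adj i j → f i (c i).root ≠ f j (c j).root) :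
    ProperExcept (node ι c H) (glue r f) ∅ :=
  properExcept_glue (fun i u v h heq => hf i u v h heq) (fun i j h heq => hroot i j h heq)

theorem hasFreeColor_glue [DecidableEq α] {A : Finset α} {i : ι} {b : (c i).Branch}
    (h : HasFreeColor (c i) (f i) (insert r A) b) :
    HasFreeColor (node ι c H) (glue r f) A ⟨i, b⟩ := by
  obtain ⟨x, hx, hb⟩ := h
  refine ⟨x, fun hxA => hx (mem_insert_of_mem hxA), ?_⟩
  rintro (_ | ⟨j, u⟩) hu
  · exact fun hrx => hx (hrx ▸ mem_insert_self r A)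
  · obtain ⟨rfl, hu⟩ := hu
    exact hb u hu

theorem injOn_glue {i : ι} {b : (c i).Branch} (hinj : Set.InjOn (f i) {u | (c i).onBranch b u})
    (hr : ∀ u, (c i).onBranch b u → f i u ≠ r) :
    Set.InjOn (glue (H := H) r f) {u | (node ι c H).onBranch ⟨i, b⟩ u} := by
  rintro (_ | ⟨j, u⟩) hu (_ | ⟨j', v⟩) hv heq
  · rfl
  · obtain ⟨rfl, hv⟩ := hv
    exact absurd heq.symm (hr v hv)
  · obtain ⟨rfl, hu⟩ := hu
    exact absurd heq (hr u hu)
  · obtain ⟨rfl, hu⟩ := hu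
    obtain ⟨rfl, hv⟩ := hv
    obtain rfl : u = v := hinj hu hv heq
    rfl

end Glue

theorem exists_proper_hasFreeColor :
    ∀ (L : List (Σ V : Type, SimpleGraph V)) {n : ℕ} (A : Finset (Fin n)) (r : Fin n),
      #(insert r A) + L.length < n → (∀ G ∈ L, G.2.Colorable n) →
      ∃ f : (buildTree L).NodeType → Fin n, f (buildTree L).root = r ∧
        ProperExcept _ f ∅ ∧ ∀ b, HasFreeColor _ f A b
  | [], n, A, r, hn, _ => by
    obtain ⟨x, hx⟩ := exists_fin_notMem_of_card_lt (by simpa using hn)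
    exact ⟨fun _ => r, rfl, fun _ _ h => h.elim,
      fun _ => ⟨x, fun h => hx (mem_insert_of_mem h), fun _ _ h => hx (h ▸ mem_insert_self r A)⟩⟩
  | ⟨ι, H⟩ :: L, n, A, r, hn, hL => by
    obtain ⟨d⟩ := hL _ List.mem_cons_self
    have hchild (i : ι) : ∃ f : (buildTree L).NodeType → Fin n, f (buildTree L).root = d i ∧
        ProperExcept _ f ∅ ∧ ∀ b, HasFreeColor _ f (insert r A) b := by
      refine exists_proper_hasFreeColor L _ (d i) ?_ fun G hG => hL G (List.mem_cons_of_mem _ hG)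
      have := card_insert_le (d i) (insert r A)
      simp only [List.length_cons] at hn
      omega
    choose f hroot hf hfree using hchild
    refine ⟨glue (c := fun _ => buildTree L) r f, rfl, properExcept_empty_glue hf fun i j h => ?_,
      fun ⟨i, b⟩ => hasFreeColor_glue (hfree i b)⟩
    rw [hroot, hroot]
    exact d.valid h

theorem exists_proper_injOn_branch :
    ∀ (L : List (Σ V : Type, SimpleGraph V)) {n : ℕ} (A : Finset (Fin n)) (r : Fin n), r ∉ A →
      #(insert r A) + L.length ≤ n → IsCriticalChain #(insert r A) L →
      ∀ b₀ : (buildTree L).Branch,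
      ∃ f : (buildTree L).NodeType → Fin n, f (buildTree L).root = r ∧ ProperExcept _ f ∅ ∧
        (∀ b ≠ b₀, HasFreeColor _ f A b) ∧ Set.InjOn f {u | (buildTree L).onBranch b₀ u} ∧
        ∀ u, (buildTree L).onBranch b₀ u → f u ∉ A
  | [], _, _, r, hr, _, _, b₀ =>
    ⟨fun _ => r, rfl, fun _ _ h => h.elim, fun _ hb => (hb rfl).elim,
      fun _ _ _ _ _ => rfl, fun _ _ => hr⟩
  | ⟨ι, H⟩ :: L, n, A, r, hr, hn, ⟨hH, hiso, hL⟩, ⟨i₀, b₀⟩ => by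
    simp only [List.length_cons] at hn
    obtain ⟨r', hr'⟩ := exists_fin_notMem_of_card_lt (A := insert r A) (by omega)
    have hcard : #(insert r' (insert r A)) = #(insert r A) + 1 := card_insert_of_notMem hr'
    obtain ⟨d, hdi₀, hdT, hd⟩ := exists_coloring_fresh_at hH (hiso i₀) hr'
    have hchild (i : ι) : ∃ f : (buildTree L).NodeType → Fin n, f (buildTree L).root = d i ∧
        ProperExcept _ f ∅ ∧
        (∀ b, (⟨i, b⟩ : Σ _ : ι, (buildTree L).Branch) ≠ ⟨i₀, b₀⟩ →
          HasFreeColor _ f (insert r A) b) ∧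
        (i = i₀ → Set.InjOn f {u | (buildTree L).onBranch b₀ u} ∧
          ∀ u, (buildTree L).onBranch b₀ u → f u ∉ insert r A) := by
      by_cases hi : i = i₀
      · subst hi
        obtain ⟨f, hroot, hf, hfree, hinj, havoid⟩ :=
          exists_proper_injOn_branch L (insert r A) r' hr' (by omega) (hcard ▸ hL) b₀
        exact ⟨f, hroot.trans hdi₀.symm, hf, fun b hb => hfree b fun h => hb (h ▸ rfl),
          fun _ => ⟨hinj, havoid⟩⟩
      · have hdi : insert (d i) (insert r A) = insert r A := insert_eq_of_mem (hdT i hi)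
        obtain ⟨f, hroot, hf, hfree⟩ := exists_proper_hasFreeColor L (insert r A) (d i)
          (by rw [hdi]; omega) (hL.colorable (by omega))
        exact ⟨f, hroot, hf, fun b _ => hfree b, fun h => absurd h hi⟩
    choose f hroot hf hfree hspine using hchild
    obtain ⟨hinj, havoid⟩ := hspine i₀ rfl
    refine ⟨glue (c := fun _ => buildTree L) r f, rfl,
      properExcept_empty_glue hf fun i j h => ?_, fun ⟨i, b⟩ hb => hasFreeColor_glue (hfree i b hb),
      injOn_glue hinj fun u hu h => havoid u hu (h ▸ mem_insert_self r A), ?_⟩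
    · rw [hroot, hroot]
      exact hd i j h
    · rintro (_ | ⟨i, u⟩) hu
      · exact hr
      · obtain ⟨rfl, hu⟩ := hu
        exact fun h => havoid u hu (mem_insert_of_mem h)

theorem exists_properExcept_rootEdge {ι : Type} {H : SimpleGraph ι}
    {L : List (Σ V : Type, SimpleGraph V)} {n : ℕ} (A : Finset (Fin n)) (r : Fin n)
    (hn : #(insert r A) + L.length < n) (hH : H.ColorableAfterEdgeDeletion #(insert r A))
    (hL : ∀ G ∈ L, G.2.Colorable n) {i₀ j₀ : ι} (h₀ : H.Adj i₀ j₀) :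
    ∃ f : (buildTree (⟨ι, H⟩ :: L)).NodeType → Fin n, f (buildTree (⟨ι, H⟩ :: L)).root = r ∧
      ProperExcept _ f {s(.inr ⟨i₀, (buildTree L).root⟩, .inr ⟨j₀, (buildTree L).root⟩)} ∧
      ∀ b, HasFreeColor _ f A b := by
  obtain ⟨d, hdT, hd⟩ := (hH s(i₀, j₀) h₀).exists_coloring_mem
  have hchild (i : ι) : ∃ f : (buildTree L).NodeType → Fin n, f (buildTree L).root = d i ∧
      ProperExcept _ f ∅ ∧ ∀ b, HasFreeColor _ f (insert r A) b :=
    exists_proper_hasFreeColor L _ (d i) (by rwa [insert_eq_of_mem (hdT i)]) hL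
  choose f hroot hf hfree using hchild
  refine ⟨glue (c := fun _ => buildTree L) r f, rfl,
    properExcept_glue (fun i u v h heq => (hf i u v h heq).elim) fun i j h heq => ?_,
    fun ⟨i, b⟩ => hasFreeColor_glue (hfree i b)⟩
  rw [hroot, hroot] at heq
  by_contra hne
  refine hd i j ((deleteEdges_adj ..).2 ⟨h, fun he => hne ?_⟩) heq
  rcases Sym2.eq_iff.1 (Set.mem_singleton_iff.1 he) with ⟨rfl, rfl⟩ | ⟨rfl, rfl⟩
  · rfl
  · exact Sym2.eq_swap

theorem exists_properExcept_treeEdge :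
    ∀ (L : List (Σ V : Type, SimpleGraph V)) {n : ℕ} (A : Finset (Fin n)) (r : Fin n), r ∉ A →
      #(insert r A) + L.length ≤ n → IsCriticalChain #(insert r A) L →
      ∀ {u₀ v₀ : (buildTree L).NodeType}, (buildTree L).treeAdj u₀ v₀ →
      ∃ f : (buildTree L).NodeType → Fin n, f (buildTree L).root = r ∧
        ProperExcept _ f {s(u₀, v₀)} ∧ ∀ b, HasFreeColor _ f A b
  | [], _, _, _, _, _, _, _, _, h₀ => h₀.elim
  | ⟨ι, H⟩ :: L, n, A, r, hr, hn, ⟨hH, hiso, hL⟩, .inr ⟨i₀, u₀⟩, .inr ⟨j₀, v₀⟩, h₀ => by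
    simp only [List.length_cons] at hn
    have hLcol := hL.colorable (n := n) (by omega)
    rcases h₀ with ⟨rfl, h₀⟩ | ⟨h₀, rfl, rfl⟩
    · obtain ⟨r', hr'⟩ := exists_fin_notMem_of_card_lt (A := insert r A) (by omega)
      have hcard : #(insert r' (insert r A)) = #(insert r A) + 1 := card_insert_of_notMem hr'
      obtain ⟨d, hdi₀, hdT, hd⟩ := exists_coloring_fresh_at hH (hiso i₀) hr'
      have hchild (i : ι) : ∃ f : (buildTree L).NodeType → Fin n, f (buildTree L).root = d i ∧
          ProperExcept _ f {e | i = i₀ ∧ e = s(u₀, v₀)} ∧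
          ∀ b, HasFreeColor _ f (insert r A) b := by
        by_cases hi : i = i₀
        · subst hi
          obtain ⟨f, hroot, hf, hfree⟩ :=
            exists_properExcept_treeEdge L (insert r A) r' hr' (by omega) (hcard ▸ hL) h₀
          exact ⟨f, hroot.trans hdi₀.symm, fun u v h heq => ⟨rfl, hf u v h heq⟩, hfree⟩
        · obtain ⟨f, hroot, hf, hfree⟩ := exists_proper_hasFreeColor L (insert r A) (d i)
            (by rw [insert_eq_of_mem (hdT i hi)]; omega) hLcol
          exact ⟨f, hroot, fun u v h heq => (hf u v h heq).elim, hfree⟩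
      choose f hroot hf hfree using hchild
      refine ⟨glue (c := fun _ => buildTree L) r f, rfl,
        properExcept_glue (fun i u v h heq => ?_) fun i j h heq => ?_,
        fun ⟨i, b⟩ => hasFreeColor_glue (hfree i b)⟩
      · obtain ⟨rfl, he⟩ := hf i u v h heq
        rcases Sym2.eq_iff.1 he with ⟨rfl, rfl⟩ | ⟨rfl, rfl⟩
        · rfl
        · exact Sym2.eq_swap
      · rw [hroot, hroot] at heq
        exact (hd i j h heq).elim
    · exact exists_properExcept_rootEdge A r (by omega) hH hLcol h₀
  | _ :: _, _, _, _, _, _, _, .inl _, _, h₀ => h₀.elim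
  | _ :: _, _, _, _, _, _, _, .inr _, .inl _, h₀ => h₀.elim

section Realization

variable {L : List (Σ V : Type, SimpleGraph V)}

theorem realization_deleteTreeEdge_colorable (hL : IsCriticalChain 1 L)
    {u₀ v₀ : (buildTree L).NodeType} (h₀ : (buildTree L).treeAdj u₀ v₀) :
    ((buildTree L).realization.deleteEdges {s(.inl u₀, .inl v₀)}).Colorable (L.length + 1) := by
  obtain ⟨f, -, hf, hfree⟩ := exists_properExcept_treeEdge L (n := L.length + 1) ∅ 0
    (notMem_empty _) (by simp [Nat.add_comm]) (by simpa using hL) h₀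
  refine realization_deleteEdges_colorable f (fun u v h heq => ?_) fun b => ?_
  · rcases Sym2.eq_iff.1 (hf u v h heq) with ⟨rfl, rfl⟩ | ⟨rfl, rfl⟩
    · rfl
    · exact Sym2.eq_swap
  · obtain ⟨c, -, hc⟩ := hfree b
    exact ⟨c, fun u hu heq => (hc u hu heq).elim⟩

theorem realization_deleteBranchEdge_colorable (hL : IsCriticalChain 1 L)
    {u₀ : (buildTree L).NodeType} {b₀ : (buildTree L).Branch} (h₀ : (buildTree L).onBranch b₀ u₀) :
    ((buildTree L).realization.deleteEdges {s(.inl u₀, .inr b₀)}).Colorable (L.length + 1) := by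
  obtain ⟨f, -, hf, hfree, hinj, -⟩ := exists_proper_injOn_branch L (n := L.length + 1) ∅ 0
    (notMem_empty _) (by simp [Nat.add_comm]) (by simpa using hL) b₀
  refine realization_deleteEdges_colorable f (fun u v h heq => (hf u v h heq).elim) fun b => ?_
  by_cases hb : b = b₀
  · -- `b₀` may repeat the color of `u₀`, which no other node of its branch uses
    subst hb
    exact ⟨f u₀, fun u hu heq => by rw [hinj hu h₀ heq]; rfl⟩
  · obtain ⟨c, -, hc⟩ := hfree b hb
    exact ⟨c, fun u hu heq => (hc u hu heq).elim⟩

theorem realization_colorableAfterEdgeDeletion (hL : IsCriticalChain 1 L) :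
    (buildTree L).realization.ColorableAfterEdgeDeletion (L.length + 1) := by
  intro e he
  induction e using Sym2.ind with
  | _ x y =>
    rw [mem_edgeSet, realization, fromRel_adj] at he
    obtain ⟨-, hxy⟩ := he
    rcases x with u | b <;> rcases y with v | b' <;> rcases hxy with h | h
    · exact realization_deleteTreeEdge_colorable hL h
    · exact Sym2.eq_swap ▸ realization_deleteTreeEdge_colorable hL h
    · exact realization_deleteBranchEdge_colorable hL h
    · exact realization_deleteBranchEdge_colorable hL h
    · exact Sym2.eq_swap ▸ realization_deleteBranchEdge_colorable hL h
    · exact Sym2.eq_swap ▸ realization_deleteBranchEdge_colorable hL h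
    · exact h.elim
    · exact h.elim

end Realization

end STree

theorem twincutList_length : ∀ m, (twincutList m).length = m
  | 0 => rfl
  | m + 1 => by simp [twincutList, twincutList_length m]

theorem nonempty_of_mem_twincutList : ∀ {m : ℕ}, ∀ G ∈ twincutList m, Nonempty G.1
  | m + 1, G, hG => by
    rcases List.mem_append.1 hG with hG | hG
    · exact nonempty_of_mem_twincutList G hG
    · rw [List.mem_singleton.1 hG]
      exact ⟨.inl (STree.root _)⟩

theorem isCriticalChain_twincutList : ∀ m, IsCriticalChain 1 (twincutList m)
  | 0 => trivial
  | m + 1 => (isCriticalChain_twincutList m).append_singleton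
      (by
        rw [Nat.add_comm]
        exact STree.realization_colorableAfterEdgeDeletion (isCriticalChain_twincutList m))
      (STree.realization_exists_adj fun G hG => nonempty_of_mem_twincutList G hG)

theorem twincut_edge_critical_general (k : ℕ)
    (e : Sym2 (twincutG k).1) (he : e ∈ (twincutG k).2.edgeSet) :
    ((twincutG k).2.deleteEdges {e}).Colorable (k - 1) := by
  obtain _ | _ | m := k
  · exact absurd he (edgeSet_bot (V := PUnit) ▸ Set.notMem_empty e)
  · exact absurd he (edgeSet_bot (V := PUnit) ▸ Set.notMem_empty e)
  · have := STree.realization_colorableAfterEdgeDeletion (isCriticalChain_twincutList m) e he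
    rwa [twincutList_length] at this

/-- the twincut graphs are edge-critical: removing any edge
from `G_k` yields a `(k-1)`-colorable graph. -/
theorem twincut_edge_critical (k : ℕ) (hk : 1 ≤ k)
    (e : Sym2 (twincutG k).1) (he : e ∈ (twincutG k).2.edgeSet) :
    ((twincutG k).2.deleteEdges {e}).Colorable (k - 1) :=
  twincut_edge_critical_general k e he
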